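/- arXiv:2305.17623 — 2 statements merged into one kernel-verified Lean document; each statement's English description precedes it below -/
import Mathlib

section
/- Let π and η be two stationary policies on a finite MDP with transition kernel P, and let d^π, d^η be their discounted state visitation distributions with discount γ < 1 starting from a common initial distribution ρ. Then ‖d^π − d^η‖₁ ≤ (2γ/(1−γ)) · E_{s ∼ d^π}[ D_TV(π(·|s), η(·|s)) ]. -/
open Matrix

/-- The state transition matrix induced by policy `ν` on an MDP with transition
kernel `P`: `P^ν(s,s') = ∑_a ν(a|s) P(s'|s,a)`. -/
noncomputable def stateKernel {S A : Type*} [Fintype S] [Fintype A]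
    (P : S → A → S → ℝ) (ν : S → A → ℝ) : Matrix S S ℝ :=
  fun s s' => ∑ a, ν s a * P s a s'

/-- The discounted state visitation distribution of policy `ν` started from initial
distribution `ρ`: `d^ν = (1−γ) ∑_{t≥0} γ^t ((P^ν)ᵀ)^t ρ`. -/
noncomputable def visitation {S A : Type*} [Fintype S] [Fintype A] [DecidableEq S]
    (P : S → A → S → ℝ) (ν : S → A → ℝ) (ρ : S → ℝ) (γ : ℝ) : S → ℝ :=
  fun s => (1 - γ) * ∑' t : ℕ, γ ^ t * (((stateKernel P ν)ᵀ ^ t) *ᵥ ρ) s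

section helpers
variable {S : Type*} [Fintype S] [DecidableEq S]

lemma pow_colStoch (B : Matrix S S ℝ) (hBn : ∀ i j, 0 ≤ B i j)
    (hBs : ∀ j, ∑ i, B i j = 1) (t : ℕ) :
    (∀ i j, 0 ≤ (B ^ t) i j) ∧ (∀ j, ∑ i, (B ^ t) i j = 1) := by
  induction t with
  | zero =>
      refine ⟨fun i j => ?_, fun j => ?_⟩
      · simp [Matrix.one_apply]
        split <;> norm_num
      · simp [Matrix.one_apply]
  | succ t ih =>
      have hmul : B ^ (t + 1) = B * B ^ t := by rw [pow_succ']
      refine ⟨fun i j => ?_, fun j => ?_⟩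
      · rw [hmul]
        exact Finset.sum_nonneg fun k _ => mul_nonneg (hBn i k) (ih.1 k j)
      · rw [hmul]
        simp only [Matrix.mul_apply]
        rw [Finset.sum_comm]
        calc ∑ k, ∑ i, B i k * (B ^ t) k j
            = ∑ k, (B ^ t) k j := by
              refine Finset.sum_congr rfl fun k _ => ?_
              rw [← Finset.sum_mul, hBs k, one_mul]
          _ = 1 := ih.2 j

lemma pow_mulVec_mem (B : Matrix S S ℝ) (hBn : ∀ i j, 0 ≤ B i j)
    (hBs : ∀ j, ∑ i, B i j = 1) (ρ : S → ℝ) (hρn : ∀ s, 0 ≤ ρ s)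
    (hρs : ∑ s, ρ s = 1) (t : ℕ) (s : S) :
    0 ≤ ((B ^ t) *ᵥ ρ) s ∧ ((B ^ t) *ᵥ ρ) s ≤ 1 := by
  obtain ⟨hn, hs⟩ := pow_colStoch B hBn hBs t
  have hnn : ∀ i, 0 ≤ ((B ^ t) *ᵥ ρ) i := fun i =>
    Finset.sum_nonneg fun j _ => mul_nonneg (hn i j) (hρn j)
  refine ⟨hnn s, ?_⟩
  have hsum : ∑ i, ((B ^ t) *ᵥ ρ) i = 1 := by
    simp only [Matrix.mulVec, dotProduct]
    rw [Finset.sum_comm]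
    calc ∑ j, ∑ i, (B ^ t) i j * ρ j = ∑ j, ρ j := by
          refine Finset.sum_congr rfl fun j _ => ?_
          rw [← Finset.sum_mul, hs j, one_mul]
      _ = 1 := hρs
  calc ((B ^ t) *ᵥ ρ) s ≤ ∑ i, ((B ^ t) *ᵥ ρ) i :=
        Finset.single_le_sum (fun i _ => hnn i) (Finset.mem_univ s)
    _ = 1 := hsum

lemma summable_vis (B : Matrix S S ℝ) (hBn : ∀ i j, 0 ≤ B i j)
    (hBs : ∀ j, ∑ i, B i j = 1) (ρ : S → ℝ) (hρn : ∀ s, 0 ≤ ρ s)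
    (hρs : ∑ s, ρ s = 1) {γ : ℝ} (h0 : 0 ≤ γ) (h1 : γ < 1) (s : S) :
    Summable (fun t : ℕ => γ ^ t * ((B ^ t) *ᵥ ρ) s) := by
  refine Summable.of_nonneg_of_le (fun t => ?_) (fun t => ?_)
    (summable_geometric_of_lt_one h0 h1)
  · exact mul_nonneg (pow_nonneg h0 t) (pow_mulVec_mem B hBn hBs ρ hρn hρs t s).1
  · calc γ ^ t * ((B ^ t) *ᵥ ρ) s ≤ γ ^ t * 1 :=
        mul_le_mul_of_nonneg_left (pow_mulVec_mem B hBn hBs ρ hρn hρs t s).2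
          (pow_nonneg h0 t)
      _ = γ ^ t := mul_one _

lemma g_rec (B : Matrix S S ℝ) (hBn : ∀ i j, 0 ≤ B i j)
    (hBs : ∀ j, ∑ i, B i j = 1) (ρ : S → ℝ) (hρn : ∀ s, 0 ≤ ρ s)
    (hρs : ∑ s, ρ s = 1) {γ : ℝ} (h0 : 0 ≤ γ) (h1 : γ < 1) (s : S) :
    (∑' t : ℕ, γ ^ t * ((B ^ t) *ᵥ ρ) s)
      = ρ s + γ * (B *ᵥ fun s' => ∑' t : ℕ, γ ^ t * ((B ^ t) *ᵥ ρ) s') s := by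
  have hsummable := summable_vis B hBn hBs ρ hρn hρs h0 h1 s
  rw [Summable.tsum_eq_zero_add hsummable]
  simp only [pow_zero, one_mul, Matrix.one_mulVec]
  congr 1
  have hstep : ∀ t : ℕ, γ ^ (t + 1) * ((B ^ (t + 1)) *ᵥ ρ) s
      = γ * ∑ s', B s s' * (γ ^ t * ((B ^ t) *ᵥ ρ) s') := by
    intro t
    rw [pow_succ' B t, ← Matrix.mulVec_mulVec]
    simp only [Matrix.mulVec, dotProduct]
    rw [Finset.mul_sum, Finset.mul_sum]
    refine Finset.sum_congr rfl fun s' _ => ?_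
    ring
  calc ∑' t : ℕ, γ ^ (t + 1) * ((B ^ (t + 1)) *ᵥ ρ) s
      = ∑' t : ℕ, γ * ∑ s', B s s' * (γ ^ t * ((B ^ t) *ᵥ ρ) s') := by
        exact tsum_congr hstep
    _ = γ * ∑' t : ℕ, ∑ s', B s s' * (γ ^ t * ((B ^ t) *ᵥ ρ) s') := by
        rw [tsum_mul_left]
    _ = γ * ∑ s', ∑' t : ℕ, B s s' * (γ ^ t * ((B ^ t) *ᵥ ρ) s') := by
        rw [Summable.tsum_finsetSum]
        intro s' _
        exact (summable_vis B hBn hBs ρ hρn hρs h0 h1 s').mul_left _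
    _ = γ * ∑ s', B s s' * ∑' t : ℕ, γ ^ t * ((B ^ t) *ᵥ ρ) s' := by
        congr 1
        exact Finset.sum_congr rfl fun s' _ => tsum_mul_left
    _ = γ * (B *ᵥ fun s' => ∑' t : ℕ, γ ^ t * ((B ^ t) *ᵥ ρ) s') s := rfl

omit [DecidableEq S] in
lemma sum_abs_mulVec_le (B : Matrix S S ℝ) (hBn : ∀ i j, 0 ≤ B i j)
    (hBs : ∀ j, ∑ i, B i j = 1) (x : S → ℝ) :
    ∑ i, |(B *ᵥ x) i| ≤ ∑ j, |x j| := by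
  calc ∑ i, |(B *ᵥ x) i| ≤ ∑ i, ∑ j, B i j * |x j| := by
        refine Finset.sum_le_sum fun i _ => ?_
        simp only [Matrix.mulVec, dotProduct]
        calc |∑ j, B i j * x j| ≤ ∑ j, |B i j * x j| := Finset.abs_sum_le_sum_abs _ _
          _ = ∑ j, B i j * |x j| := by
              refine Finset.sum_congr rfl fun j _ => ?_
              rw [abs_mul, abs_of_nonneg (hBn i j)]
    _ = ∑ j, |x j| := by
        rw [Finset.sum_comm]
        refine Finset.sum_congr rfl fun j _ => ?_
        rw [← Finset.sum_mul, hBs j, one_mul]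

end helpers

section kernel
variable {S A : Type*} [Fintype S] [Fintype A] [DecidableEq S]

lemma stateKernelT_nonneg (P : S → A → S → ℝ) (ν : S → A → ℝ)
    (hPnonneg : ∀ s a s', 0 ≤ P s a s') (hνnonneg : ∀ s a, 0 ≤ ν s a) :
    ∀ i j, 0 ≤ (stateKernel P ν)ᵀ i j := fun i j =>
  Finset.sum_nonneg fun a _ => mul_nonneg (hνnonneg j a) (hPnonneg j a i)

lemma stateKernelT_colsum (P : S → A → S → ℝ) (ν : S → A → ℝ)
    (hPsum : ∀ s a, ∑ s', P s a s' = 1) (hνsum : ∀ s, ∑ a, ν s a = 1) :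
    ∀ j, ∑ i, (stateKernel P ν)ᵀ i j = 1 := by
  intro j
  simp only [Matrix.transpose_apply, stateKernel]
  rw [Finset.sum_comm]
  calc ∑ a, ∑ i, ν j a * P j a i = ∑ a, ν j a := by
        refine Finset.sum_congr rfl fun a _ => ?_
        rw [← Finset.mul_sum, hPsum j a, mul_one]
    _ = 1 := hνsum j

lemma visitation_nonneg (P : S → A → S → ℝ) (ν : S → A → ℝ) (ρ : S → ℝ) {γ : ℝ}
    (hPnonneg : ∀ s a s', 0 ≤ P s a s') (hPsum : ∀ s a, ∑ s', P s a s' = 1)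
    (hνnonneg : ∀ s a, 0 ≤ ν s a) (hνsum : ∀ s, ∑ a, ν s a = 1)
    (hρnonneg : ∀ s, 0 ≤ ρ s) (h0 : 0 ≤ γ) (h1 : γ < 1) (s : S) :
    0 ≤ visitation P ν ρ γ s := by
  refine mul_nonneg (by linarith) (tsum_nonneg fun t => mul_nonneg (pow_nonneg h0 t) ?_)
  refine Finset.sum_nonneg fun j _ => mul_nonneg ?_ (hρnonneg j)
  exact (pow_colStoch _ (stateKernelT_nonneg P ν hPnonneg hνnonneg)
    (stateKernelT_colsum P ν hPsum hνsum) t).1 s j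

lemma visitation_rec (P : S → A → S → ℝ) (ν : S → A → ℝ) (ρ : S → ℝ) {γ : ℝ}
    (hPnonneg : ∀ s a s', 0 ≤ P s a s') (hPsum : ∀ s a, ∑ s', P s a s' = 1)
    (hνnonneg : ∀ s a, 0 ≤ ν s a) (hνsum : ∀ s, ∑ a, ν s a = 1)
    (hρnonneg : ∀ s, 0 ≤ ρ s) (hρsum : ∑ s, ρ s = 1)
    (h0 : 0 ≤ γ) (h1 : γ < 1) (s : S) :
    visitation P ν ρ γ s
      = (1 - γ) * ρ s + γ * ((stateKernel P ν)ᵀ *ᵥ visitation P ν ρ γ) s := by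
  set B := (stateKernel P ν)ᵀ with hB
  have hBn := stateKernelT_nonneg P ν hPnonneg hνnonneg
  have hBs := stateKernelT_colsum P ν hPsum hνsum
  set g : S → ℝ := fun s' => ∑' t : ℕ, γ ^ t * ((B ^ t) *ᵥ ρ) s' with hg
  have hvis : ∀ s', visitation P ν ρ γ s' = (1 - γ) * g s' := fun s' => rfl
  have hmv : (B *ᵥ visitation P ν ρ γ) s = (1 - γ) * (B *ᵥ g) s := by
    simp only [Matrix.mulVec, dotProduct, Finset.mul_sum]
    refine Finset.sum_congr rfl fun s' _ => ?_
    rw [hvis s']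
    ring
  have hgr : g s = ρ s + γ * (B *ᵥ g) s := g_rec B hBn hBs ρ hρnonneg hρsum h0 h1 s
  rw [hvis s, hmv, hgr]
  ring

end kernel

/-- **Visitation-distribution shift bound (Lemma 3 of Achiam et al.)**: for two
stationary policies `π, η` with discounted visitation distributions `d^π, d^η`
(discount `γ < 1`, common initial distribution `ρ`),
`‖d^π − d^η‖₁ ≤ (2γ/(1−γ)) · E_{s ∼ d^π}[ D_TV(π(·|s), η(·|s)) ]`. -/
theorem visitation_l1_diff_le {S A : Type*} [Fintype S] [Fintype A] [DecidableEq S]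
    (P : S → A → S → ℝ) (π η : S → A → ℝ) (ρ : S → ℝ) (γ : ℝ)
    (hPnonneg : ∀ s a s', 0 ≤ P s a s') (hPsum : ∀ s a, ∑ s', P s a s' = 1)
    (hπnonneg : ∀ s a, 0 ≤ π s a) (hπsum : ∀ s, ∑ a, π s a = 1)
    (hηnonneg : ∀ s a, 0 ≤ η s a) (hηsum : ∀ s, ∑ a, η s a = 1)
    (hρnonneg : ∀ s, 0 ≤ ρ s) (hρsum : ∑ s, ρ s = 1)
    (h0 : 0 ≤ γ) (h1 : γ < 1) :
    ∑ s', |visitation P π ρ γ s' - visitation P η ρ γ s'| ≤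
      (2 * γ / (1 - γ)) *
        ∑ s, visitation P π ρ γ s * ((1 / 2) * ∑ a, |π s a - η s a|) := by
  set Bπ := (stateKernel P π)ᵀ with hBπ
  set Bη := (stateKernel P η)ᵀ with hBη
  set dπ := visitation P π ρ γ with hdπ
  set dη := visitation P η ρ γ with hdη
  have hBηn := stateKernelT_nonneg P η hPnonneg hηnonneg
  have hBηs := stateKernelT_colsum P η hPsum hηsum
  have recπ : ∀ s, dπ s = (1 - γ) * ρ s + γ * (Bπ *ᵥ dπ) s :=
    visitation_rec P π ρ hPnonneg hPsum hπnonneg hπsum hρnonneg hρsum h0 h1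
  have recη : ∀ s, dη s = (1 - γ) * ρ s + γ * (Bη *ᵥ dη) s :=
    visitation_rec P η ρ hPnonneg hPsum hηnonneg hηsum hρnonneg hρsum h0 h1
  have dπn : ∀ s, 0 ≤ dπ s := fun s =>
    visitation_nonneg P π ρ hPnonneg hPsum hπnonneg hπsum hρnonneg h0 h1 s
  set e : S → ℝ := fun s => dπ s - dη s with he
  have hkey : ∀ s, e s = γ * ((Bη *ᵥ e) s + ∑ s'', (Bπ s s'' - Bη s s'') * dπ s'') := by
    intro s
    have h2 : (Bπ *ᵥ dπ) s - (Bη *ᵥ dη) s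
        = (Bη *ᵥ e) s + ∑ s'', (Bπ s s'' - Bη s s'') * dπ s'' := by
      simp only [Matrix.mulVec, dotProduct, he]
      rw [← Finset.sum_sub_distrib, ← Finset.sum_add_distrib]
      exact Finset.sum_congr rfl fun s'' _ => by ring
    have h3 : e s = γ * ((Bπ *ᵥ dπ) s - (Bη *ᵥ dη) s) := by
      show dπ s - dη s = _
      rw [recπ s, recη s]
      ring
    rw [h3, h2]
  set K := ∑ s, |∑ s'', (Bπ s s'' - Bη s s'') * dπ s''| with hK
  set E := ∑ s, |e s| with hE
  have hstep : E ≤ γ * E + γ * K := by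
    have h1' : ∀ s, |e s| ≤ γ * |(Bη *ᵥ e) s| + γ * |∑ s'', (Bπ s s'' - Bη s s'') * dπ s''| := by
      intro s
      rw [hkey s, abs_mul, abs_of_nonneg h0]
      calc γ * |(Bη *ᵥ e) s + ∑ s'', (Bπ s s'' - Bη s s'') * dπ s''|
          ≤ γ * (|(Bη *ᵥ e) s| + |∑ s'', (Bπ s s'' - Bη s s'') * dπ s''|) :=
            mul_le_mul_of_nonneg_left (abs_add_le _ _) h0
        _ = _ := by ring
    calc E ≤ ∑ s, (γ * |(Bη *ᵥ e) s| + γ * |∑ s'', (Bπ s s'' - Bη s s'') * dπ s''|) :=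
          Finset.sum_le_sum fun s _ => h1' s
      _ = γ * ∑ s, |(Bη *ᵥ e) s| + γ * K := by
          rw [Finset.sum_add_distrib, ← Finset.mul_sum, ← Finset.mul_sum]
      _ ≤ γ * E + γ * K := by
          have := sum_abs_mulVec_le Bη hBηn hBηs e
          have h4 : γ * ∑ s, |(Bη *ᵥ e) s| ≤ γ * E :=
            mul_le_mul_of_nonneg_left this h0
          linarith
  have hKle : K ≤ ∑ s, dπ s * ∑ a, |π s a - η s a| := by
    have hentry : ∀ s s'', Bπ s s'' - Bη s s'' = ∑ a, (π s'' a - η s'' a) * P s'' a s := by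
      intro s s''
      simp only [hBπ, hBη, Matrix.transpose_apply, stateKernel, ← Finset.sum_sub_distrib]
      exact Finset.sum_congr rfl fun a _ => by ring
    calc K ≤ ∑ s, ∑ s'', ∑ a, |π s'' a - η s'' a| * P s'' a s * dπ s'' := by
          refine Finset.sum_le_sum fun s _ => ?_
          calc |∑ s'', (Bπ s s'' - Bη s s'') * dπ s''|
              = |∑ s'', ∑ a, (π s'' a - η s'' a) * P s'' a s * dπ s''| := by
                congr 1
                refine Finset.sum_congr rfl fun s'' _ => ?_
                rw [hentry s s'', Finset.sum_mul]
            _ ≤ ∑ s'', |∑ a, (π s'' a - η s'' a) * P s'' a s * dπ s''| :=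
                Finset.abs_sum_le_sum_abs _ _
            _ ≤ ∑ s'', ∑ a, |π s'' a - η s'' a| * P s'' a s * dπ s'' := by
                refine Finset.sum_le_sum fun s'' _ => ?_
                calc |∑ a, (π s'' a - η s'' a) * P s'' a s * dπ s''|
                    ≤ ∑ a, |(π s'' a - η s'' a) * P s'' a s * dπ s''| :=
                      Finset.abs_sum_le_sum_abs _ _
                  _ = ∑ a, |π s'' a - η s'' a| * P s'' a s * dπ s'' := by
                      refine Finset.sum_congr rfl fun a _ => ?_
                      rw [abs_mul, abs_mul, abs_of_nonneg (hPnonneg s'' a s),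
                        abs_of_nonneg (dπn s'')]
      _ = ∑ s'', dπ s'' * ∑ a, |π s'' a - η s'' a| := by
          rw [Finset.sum_comm]
          refine Finset.sum_congr rfl fun s'' _ => ?_
          rw [Finset.sum_comm, Finset.mul_sum]
          refine Finset.sum_congr rfl fun a _ => ?_
          calc ∑ s, |π s'' a - η s'' a| * P s'' a s * dπ s''
              = |π s'' a - η s'' a| * dπ s'' * ∑ s, P s'' a s := by
                rw [Finset.mul_sum]
                exact Finset.sum_congr rfl fun s _ => by ring
            _ = dπ s'' * |π s'' a - η s'' a| := by rw [hPsum s'' a]; ring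
  have h1γ : 0 < 1 - γ := by linarith
  have hRHS : (2 * γ / (1 - γ)) * ∑ s, dπ s * ((1 / 2) * ∑ a, |π s a - η s a|)
      = (γ * ∑ s, dπ s * ∑ a, |π s a - η s a|) / (1 - γ) := by
    rw [eq_div_iff (ne_of_gt h1γ), Finset.mul_sum, Finset.sum_mul, Finset.mul_sum]
    refine Finset.sum_congr rfl fun s _ => ?_
    field_simp
  rw [hRHS, le_div_iff₀ h1γ]
  have hγK : γ * K ≤ γ * ∑ s, dπ s * ∑ a, |π s a - η s a| :=
    mul_le_mul_of_nonneg_left hKle h0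
  have hre : E * (1 - γ) = E - γ * E := by ring
  linarith
end

section
/- Let π, η be stationary policies on a finite MDP with rewards in [−R_max, R_max] (or [0, R_max]) and discount γ < 1. For any state s̃, |V^π(s̃) − V^η(s̃)| ≤ (2 R_max/(1−γ)²) · E_{s ∼ d^π(·|s₀=s̃)}[ D_TV(π(·|s), η(·|s)) ], where d^π(·|s₀=s̃) is the discounted visitation distribution starting from the single state s̃. -/
open Matrix

/-- The discounted state visitation distribution of policy `ν` started from the
single state `st`: `d^ν(s|s₀=st) = (1−γ) ∑_{t≥0} γ^t P(s_t = s | s₀ = st)`. -/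
noncomputable def visitationFrom {S A : Type*} [Fintype S] [Fintype A] [DecidableEq S]
    (P : S → A → S → ℝ) (ν : S → A → ℝ) (γ : ℝ) (s0 : S) : S → ℝ :=
  fun s => (1 - γ) * ∑' t : ℕ, γ ^ t * (((stateKernel P ν)ᵀ ^ t) *ᵥ (Pi.single s0 1)) s

/-- The value of policy `ν` at state `st`, written through its discounted state-action
occupancy measure: `V^ν(st) = (1/(1−γ)) ∑_{s,a} d^ν(s|s₀=st) ν(a|s) r(s,a)`. -/
noncomputable def valueFrom {S A : Type*} [Fintype S] [Fintype A] [DecidableEq S]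
    (P : S → A → S → ℝ) (ν : S → A → ℝ) (r : S → A → ℝ) (γ : ℝ) (s0 : S) : ℝ :=
  (1 / (1 - γ)) * ∑ s, ∑ a, visitationFrom P ν γ s0 s * ν s a * r s a

set_option linter.unusedSectionVars false

section aux
variable {S A : Type*} [Fintype S] [Fintype A] [DecidableEq S]

noncomputable def xvec (P : S → A → S → ℝ) (ν : S → A → ℝ) (st : S) (t : ℕ) : S → ℝ :=
  (((stateKernel P ν)ᵀ) ^ t) *ᵥ (Pi.single st 1)

lemma xvec_zero (P : S → A → S → ℝ) (ν : S → A → ℝ) (st : S) :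
    xvec P ν st 0 = Pi.single st 1 := by
  rw [xvec, pow_zero, Matrix.one_mulVec]

lemma xvec_succ (P : S → A → S → ℝ) (ν : S → A → ℝ) (st : S) (t : ℕ) (s : S) :
    xvec P ν st (t+1) s = ∑ s', stateKernel P ν s' s * xvec P ν st t s' := by
  have h : xvec P ν st (t+1) = ((stateKernel P ν)ᵀ) *ᵥ xvec P ν st t := by
    rw [xvec, xvec, pow_succ', Matrix.mulVec_mulVec]
  rw [h]
  simp [Matrix.mulVec, dotProduct, Matrix.transpose_apply]

lemma kernel_nonneg (P : S → A → S → ℝ) (ν : S → A → ℝ)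
    (hPnonneg : ∀ s a s', 0 ≤ P s a s') (hνnonneg : ∀ s a, 0 ≤ ν s a) (s s' : S) :
    0 ≤ stateKernel P ν s s' :=
  Finset.sum_nonneg fun a _ => mul_nonneg (hνnonneg s a) (hPnonneg s a s')

lemma kernel_sum (P : S → A → S → ℝ) (ν : S → A → ℝ)
    (hPsum : ∀ s a, ∑ s', P s a s' = 1) (hνsum : ∀ s, ∑ a, ν s a = 1) (s : S) :
    ∑ s', stateKernel P ν s s' = 1 := by
  simp only [stateKernel]
  rw [Finset.sum_comm]
  simp only [← Finset.mul_sum]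
  simp [hPsum, hνsum]

lemma xvec_nonneg (P : S → A → S → ℝ) (ν : S → A → ℝ)
    (hPnonneg : ∀ s a s', 0 ≤ P s a s') (hνnonneg : ∀ s a, 0 ≤ ν s a) (st : S)
    (t : ℕ) (s : S) : 0 ≤ xvec P ν st t s := by
  induction t generalizing s with
  | zero => rw [xvec_zero]; simp only [Pi.single_apply]; split <;> norm_num
  | succ t ih =>
    rw [xvec_succ]
    exact Finset.sum_nonneg fun s' _ =>
      mul_nonneg (kernel_nonneg P ν hPnonneg hνnonneg s' s) (ih s')

lemma xvec_sum (P : S → A → S → ℝ) (ν : S → A → ℝ)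
    (hPsum : ∀ s a, ∑ s', P s a s' = 1) (hνsum : ∀ s, ∑ a, ν s a = 1) (st : S)
    (t : ℕ) : ∑ s, xvec P ν st t s = 1 := by
  induction t with
  | zero => rw [xvec_zero]; simp
  | succ t ih =>
    simp only [xvec_succ]
    rw [Finset.sum_comm]
    simp only [← Finset.sum_mul]
    simp only [kernel_sum P ν hPsum hνsum, one_mul]
    exact ih

lemma xvec_le_one (P : S → A → S → ℝ) (ν : S → A → ℝ)
    (hPnonneg : ∀ s a s', 0 ≤ P s a s') (hPsum : ∀ s a, ∑ s', P s a s' = 1)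
    (hνnonneg : ∀ s a, 0 ≤ ν s a) (hνsum : ∀ s, ∑ a, ν s a = 1) (st : S)
    (t : ℕ) (s : S) : xvec P ν st t s ≤ 1 := by
  calc xvec P ν st t s ≤ ∑ s', xvec P ν st t s' :=
        Finset.single_le_sum (fun s' _ => xvec_nonneg P ν hPnonneg hνnonneg st t s')
          (Finset.mem_univ s)
    _ = 1 := xvec_sum P ν hPsum hνsum st t

end aux

section tsums
variable {S A : Type*} [Fintype S] [Fintype A] [DecidableEq S]
variable (P : S → A → S → ℝ) (ν : S → A → ℝ) (γ : ℝ) (st : S)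

noncomputable def gvec : S → ℝ := fun s => ∑' t : ℕ, γ ^ t * xvec P ν st t s

lemma visitationFrom_eq (s : S) :
    visitationFrom P ν γ st s = (1 - γ) * gvec P ν γ st s := rfl

variable (hPnonneg : ∀ s a s', 0 ≤ P s a s') (hPsum : ∀ s a, ∑ s', P s a s' = 1)
variable (hνnonneg : ∀ s a, 0 ≤ ν s a) (hνsum : ∀ s, ∑ a, ν s a = 1)
variable (h0 : 0 ≤ γ) (h1 : γ < 1)

include hPnonneg hPsum hνnonneg hνsum h0 h1

lemma xsummable (s : S) : Summable (fun t : ℕ => γ ^ t * xvec P ν st t s) := by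
  apply Summable.of_nonneg_of_le
    (fun t => mul_nonneg (pow_nonneg h0 t) (xvec_nonneg P ν hPnonneg hνnonneg st t s))
    (fun t => ?_) (summable_geometric_of_lt_one h0 h1)
  calc γ ^ t * xvec P ν st t s ≤ γ ^ t * 1 :=
        mul_le_mul_of_nonneg_left (xvec_le_one P ν hPnonneg hPsum hνnonneg hνsum st t s)
          (pow_nonneg h0 t)
    _ = γ ^ t := mul_one _

lemma gvec_nonneg (s : S) : 0 ≤ gvec P ν γ st s :=
  tsum_nonneg fun t => mul_nonneg (pow_nonneg h0 t) (xvec_nonneg P ν hPnonneg hνnonneg st t s)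

lemma gvec_sum : ∑ s, gvec P ν γ st s = (1 - γ)⁻¹ := by
  simp only [gvec]
  rw [← Summable.tsum_finsetSum (fun s _ => xsummable P ν γ st hPnonneg hPsum hνnonneg hνsum h0 h1 s)]
  calc (∑' t : ℕ, ∑ s, γ ^ t * xvec P ν st t s)
      = ∑' t : ℕ, γ ^ t := by
        apply tsum_congr; intro t
        rw [← Finset.mul_sum, xvec_sum P ν hPsum hνsum st t, mul_one]
    _ = (1 - γ)⁻¹ := tsum_geometric_of_lt_one h0 h1

lemma gvec_fixed (s : S) :
    gvec P ν γ st s = (Pi.single st 1 : S → ℝ) s + γ * ∑ s', stateKernel P ν s' s * gvec P ν γ st s' := by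
  have hsum := xsummable P ν γ st hPnonneg hPsum hνnonneg hνsum h0 h1 s
  have h2 : (∑' t : ℕ, γ ^ (t + 1) * xvec P ν st (t + 1) s)
      = γ * ∑ s', stateKernel P ν s' s * gvec P ν γ st s' := by
    calc (∑' t : ℕ, γ ^ (t + 1) * xvec P ν st (t + 1) s)
        = ∑' t : ℕ, ∑ s', γ * (stateKernel P ν s' s * (γ ^ t * xvec P ν st t s')) := by
          apply tsum_congr; intro t
          rw [xvec_succ, Finset.mul_sum]
          apply Finset.sum_congr rfl; intro s' _; ring
      _ = ∑ s', ∑' t : ℕ, γ * (stateKernel P ν s' s * (γ ^ t * xvec P ν st t s')) := by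
          rw [Summable.tsum_finsetSum]
          intro s' _
          exact ((xsummable P ν γ st hPnonneg hPsum hνnonneg hνsum h0 h1 s').mul_left _).mul_left _
      _ = ∑ s', γ * (stateKernel P ν s' s * gvec P ν γ st s') := by
          apply Finset.sum_congr rfl; intro s' _
          rw [tsum_mul_left, tsum_mul_left]; rfl
      _ = γ * ∑ s', stateKernel P ν s' s * gvec P ν γ st s' := by rw [Finset.mul_sum]
  conv_lhs => rw [gvec]
  rw [Summable.tsum_eq_zero_add hsum, h2, pow_zero, one_mul, xvec_zero]

lemma visitation_nonneg_s7 (s : S) : 0 ≤ visitationFrom P ν γ st s := by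
  rw [visitationFrom_eq]
  exact mul_nonneg (by linarith) (gvec_nonneg P ν γ st hPnonneg hPsum hνnonneg hνsum h0 h1 s)

lemma visitation_fixed (s : S) :
    visitationFrom P ν γ st s = (1 - γ) * (Pi.single st 1 : S → ℝ) s +
      γ * ∑ s', stateKernel P ν s' s * visitationFrom P ν γ st s' := by
  simp only [visitationFrom_eq]
  rw [gvec_fixed P ν γ st hPnonneg hPsum hνnonneg hνsum h0 h1 s]
  have h3 : ∑ s', stateKernel P ν s' s * ((1 - γ) * gvec P ν γ st s')
      = (1 - γ) * ∑ s', stateKernel P ν s' s * gvec P ν γ st s' := by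
    rw [Finset.mul_sum]; exact Finset.sum_congr rfl fun _ _ => by ring
  rw [h3]; ring

end tsums

/-- **Value-difference lemma**: for stationary policies `π, η` on a finite MDP with
rewards in `[0, R_max]` and discount `γ < 1`, for any state `st`,
`|V^π(st) − V^η(st)| ≤ (2 R_max/(1−γ)²) · E_{s ∼ d^π(·|s₀=st)}[ D_TV(π(·|s), η(·|s)) ]`. -/
theorem value_diff_le {S A : Type*} [Fintype S] [Fintype A] [DecidableEq S]
    (P : S → A → S → ℝ) (π η : S → A → ℝ) (r : S → A → ℝ) (Rmax γ : ℝ)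
    (hPnonneg : ∀ s a s', 0 ≤ P s a s') (hPsum : ∀ s a, ∑ s', P s a s' = 1)
    (hπnonneg : ∀ s a, 0 ≤ π s a) (hπsum : ∀ s, ∑ a, π s a = 1)
    (hηnonneg : ∀ s a, 0 ≤ η s a) (hηsum : ∀ s, ∑ a, η s a = 1)
    (hr0 : ∀ s a, 0 ≤ r s a) (hrmax : ∀ s a, r s a ≤ Rmax)
    (h0 : 0 ≤ γ) (h1 : γ < 1) (st : S) :
    |valueFrom P π r γ st - valueFrom P η r γ st| ≤
      (2 * Rmax / (1 - γ) ^ 2) *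
        ∑ s, visitationFrom P π γ st s * ((1 / 2) * ∑ a, |π s a - η s a|) := by
  have hγ : (0:ℝ) < 1 - γ := by linarith
  have hA : Nonempty A := by
    by_contra h
    rw [not_nonempty_iff] at h
    have := hπsum st
    simp at this
  have hRmax : 0 ≤ Rmax := by
    obtain ⟨a⟩ := hA
    exact le_trans (hr0 st a) (hrmax st a)
  have hdπ0 : ∀ s, 0 ≤ visitationFrom P π γ st s := fun s =>
    visitation_nonneg_s7 P π γ st hPnonneg hPsum hπnonneg hπsum h0 h1 s
  have hT0 : ∀ s, 0 ≤ ∑ a, |π s a - η s a| := fun s =>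
    Finset.sum_nonneg fun a _ => abs_nonneg _
  have hW0 : 0 ≤ ∑ s, visitationFrom P π γ st s * ∑ a, |π s a - η s a| :=
    Finset.sum_nonneg fun s _ => mul_nonneg (hdπ0 s) (hT0 s)
  have hL0 : 0 ≤ ∑ s, |visitationFrom P π γ st s - visitationFrom P η γ st s| :=
    Finset.sum_nonneg fun s _ => abs_nonneg _
  -- recursion for the visitation difference
  have hrec : ∀ s, visitationFrom P π γ st s - visitationFrom P η γ st s
      = γ * ∑ s', (stateKernel P η s' s *
            (visitationFrom P π γ st s' - visitationFrom P η γ st s')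
          + (stateKernel P π s' s - stateKernel P η s' s) * visitationFrom P π γ st s') := by
    intro s
    have e1 := visitation_fixed P π γ st hPnonneg hPsum hπnonneg hπsum h0 h1 s
    have e2 := visitation_fixed P η γ st hPnonneg hPsum hηnonneg hηsum h0 h1 s
    calc visitationFrom P π γ st s - visitationFrom P η γ st s
        = γ * (∑ s', stateKernel P π s' s * visitationFrom P π γ st s')
          - γ * (∑ s', stateKernel P η s' s * visitationFrom P η γ st s') := by
          rw [e1, e2]; ring
      _ = γ * ∑ s', (stateKernel P η s' s *
            (visitationFrom P π γ st s' - visitationFrom P η γ st s')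
          + (stateKernel P π s' s - stateKernel P η s' s) * visitationFrom P π γ st s') := by
          rw [← mul_sub, ← Finset.sum_sub_distrib]
          congr 1
          exact Finset.sum_congr rfl fun s' _ => by ring
  -- pointwise absolute bound
  have habs : ∀ s, |visitationFrom P π γ st s - visitationFrom P η γ st s| ≤
      γ * ∑ s', stateKernel P η s' s *
          |visitationFrom P π γ st s' - visitationFrom P η γ st s'|
      + γ * ∑ s', |stateKernel P π s' s - stateKernel P η s' s|
          * visitationFrom P π γ st s' := by
    intro s
    rw [hrec s, abs_mul, abs_of_nonneg h0, ← mul_add, ← Finset.sum_add_distrib]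
    apply mul_le_mul_of_nonneg_left ?_ h0
    refine (Finset.abs_sum_le_sum_abs _ _).trans ?_
    apply Finset.sum_le_sum; intro s' _
    refine (abs_add_le _ _).trans (le_of_eq ?_)
    rw [abs_mul, abs_mul, abs_of_nonneg (kernel_nonneg P η hPnonneg hηnonneg s' s),
      abs_of_nonneg (hdπ0 s')]
  -- kernel-difference row bound
  have hKdiff : ∀ s', ∑ s, |stateKernel P π s' s - stateKernel P η s' s|
      ≤ ∑ a, |π s' a - η s' a| := by
    intro s'
    have hpt : ∀ s, |stateKernel P π s' s - stateKernel P η s' s|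
        ≤ ∑ a, |π s' a - η s' a| * P s' a s := by
      intro s
      have he : stateKernel P π s' s - stateKernel P η s' s
          = ∑ a, (π s' a - η s' a) * P s' a s := by
        simp only [stateKernel]
        rw [← Finset.sum_sub_distrib]
        exact Finset.sum_congr rfl fun a _ => by ring
      rw [he]
      refine (Finset.abs_sum_le_sum_abs _ _).trans ?_
      apply Finset.sum_le_sum; intro a _
      rw [abs_mul, abs_of_nonneg (hPnonneg s' a s)]
    calc ∑ s, |stateKernel P π s' s - stateKernel P η s' s|
        ≤ ∑ s, ∑ a, |π s' a - η s' a| * P s' a s := Finset.sum_le_sum fun s _ => hpt s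
      _ = ∑ a, |π s' a - η s' a| * ∑ s, P s' a s := by
          rw [Finset.sum_comm]
          exact Finset.sum_congr rfl fun a _ => by rw [← Finset.mul_sum]
      _ = ∑ a, |π s' a - η s' a| := by
          exact Finset.sum_congr rfl fun a _ => by rw [hPsum s' a, mul_one]
  -- L ≤ γ L + γ W
  have hLbound : (∑ s, |visitationFrom P π γ st s - visitationFrom P η γ st s|)
      ≤ γ * (∑ s, |visitationFrom P π γ st s - visitationFrom P η γ st s|)
        + γ * (∑ s, visitationFrom P π γ st s * ∑ a, |π s a - η s a|) := by
    have e1 : (∑ s, ∑ s', stateKernel P η s' s *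
        |visitationFrom P π γ st s' - visitationFrom P η γ st s'|)
        = ∑ s, |visitationFrom P π γ st s - visitationFrom P η γ st s| := by
      rw [Finset.sum_comm]
      apply Finset.sum_congr rfl; intro s' _
      rw [← Finset.sum_mul, kernel_sum P η hPsum hηsum s', one_mul]
    have e2 : (∑ s, ∑ s', |stateKernel P π s' s - stateKernel P η s' s|
        * visitationFrom P π γ st s')
        ≤ ∑ s, visitationFrom P π γ st s * ∑ a, |π s a - η s a| := by
      rw [Finset.sum_comm]
      apply Finset.sum_le_sum; intro s' _
      rw [← Finset.sum_mul, mul_comm]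
      exact mul_le_mul_of_nonneg_left (hKdiff s') (hdπ0 s')
    calc (∑ s, |visitationFrom P π γ st s - visitationFrom P η γ st s|)
        ≤ ∑ s, (γ * ∑ s', stateKernel P η s' s *
            |visitationFrom P π γ st s' - visitationFrom P η γ st s'|
          + γ * ∑ s', |stateKernel P π s' s - stateKernel P η s' s|
            * visitationFrom P π γ st s') := Finset.sum_le_sum fun s _ => habs s
      _ = γ * (∑ s, ∑ s', stateKernel P η s' s *
            |visitationFrom P π γ st s' - visitationFrom P η γ st s'|)
          + γ * (∑ s, ∑ s', |stateKernel P π s' s - stateKernel P η s' s|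
            * visitationFrom P π γ st s') := by
          rw [Finset.sum_add_distrib, ← Finset.mul_sum, ← Finset.mul_sum]
      _ ≤ γ * (∑ s, |visitationFrom P π γ st s - visitationFrom P η γ st s|)
          + γ * (∑ s, visitationFrom P π γ st s * ∑ a, |π s a - η s a|) := by
          rw [e1]
          exact add_le_add le_rfl (mul_le_mul_of_nonneg_left e2 h0)
  have hLW : (∑ s, |visitationFrom P π γ st s - visitationFrom P η γ st s|)
      ≤ γ / (1 - γ) * (∑ s, visitationFrom P π γ st s * ∑ a, |π s a - η s a|) := by
    rw [div_mul_eq_mul_div, le_div_iff₀ hγ]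
    nlinarith [hLbound]
  -- value difference identity
  have hval : valueFrom P π r γ st - valueFrom P η r γ st
      = (1 / (1 - γ)) * ((∑ s, visitationFrom P π γ st s * ∑ a, (π s a - η s a) * r s a)
          + ∑ s, (visitationFrom P π γ st s - visitationFrom P η γ st s)
            * ∑ a, η s a * r s a) := by
    rw [valueFrom, valueFrom, ← mul_sub]
    congr 1
    rw [← Finset.sum_sub_distrib, ← Finset.sum_add_distrib]
    apply Finset.sum_congr rfl; intro s _
    rw [Finset.mul_sum, Finset.mul_sum, ← Finset.sum_sub_distrib, ← Finset.sum_add_distrib]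
    apply Finset.sum_congr rfl; intro a _
    ring
  -- bound first term
  have hT1 : |∑ s, visitationFrom P π γ st s * ∑ a, (π s a - η s a) * r s a|
      ≤ Rmax * ∑ s, visitationFrom P π γ st s * ∑ a, |π s a - η s a| := by
    refine (Finset.abs_sum_le_sum_abs _ _).trans ?_
    rw [Finset.mul_sum]
    apply Finset.sum_le_sum; intro s _
    rw [abs_mul, abs_of_nonneg (hdπ0 s)]
    have hb : |∑ a, (π s a - η s a) * r s a| ≤ Rmax * ∑ a, |π s a - η s a| := by
      refine (Finset.abs_sum_le_sum_abs _ _).trans ?_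
      rw [Finset.mul_sum]
      apply Finset.sum_le_sum; intro a _
      rw [abs_mul, abs_of_nonneg (hr0 s a), mul_comm]
      exact mul_le_mul_of_nonneg_right (hrmax s a) (abs_nonneg _)
    calc visitationFrom P π γ st s * |∑ a, (π s a - η s a) * r s a|
        ≤ visitationFrom P π γ st s * (Rmax * ∑ a, |π s a - η s a|) :=
          mul_le_mul_of_nonneg_left hb (hdπ0 s)
      _ = Rmax * (visitationFrom P π γ st s * ∑ a, |π s a - η s a|) := by ring
  -- bound second term
  have hbη : ∀ s, |∑ a, η s a * r s a| ≤ Rmax := by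
    intro s
    rw [abs_of_nonneg (Finset.sum_nonneg fun a _ => mul_nonneg (hηnonneg s a) (hr0 s a))]
    calc ∑ a, η s a * r s a ≤ ∑ a, η s a * Rmax :=
          Finset.sum_le_sum fun a _ => mul_le_mul_of_nonneg_left (hrmax s a) (hηnonneg s a)
      _ = Rmax := by rw [← Finset.sum_mul, hηsum s, one_mul]
  have hT2 : |∑ s, (visitationFrom P π γ st s - visitationFrom P η γ st s)
        * ∑ a, η s a * r s a|
      ≤ Rmax * ∑ s, |visitationFrom P π γ st s - visitationFrom P η γ st s| := by
    refine (Finset.abs_sum_le_sum_abs _ _).trans ?_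
    rw [Finset.mul_sum]
    apply Finset.sum_le_sum; intro s _
    rw [abs_mul, mul_comm]
    exact mul_le_mul_of_nonneg_right (hbη s) (abs_nonneg _)
  -- assemble
  rw [hval, abs_mul, abs_of_nonneg (le_of_lt (by positivity : (0:ℝ) < 1 / (1 - γ)))]
  have hsum2 : |(∑ s, visitationFrom P π γ st s * ∑ a, (π s a - η s a) * r s a)
        + ∑ s, (visitationFrom P π γ st s - visitationFrom P η γ st s)
          * ∑ a, η s a * r s a|
      ≤ Rmax * (∑ s, visitationFrom P π γ st s * ∑ a, |π s a - η s a|)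
        + Rmax * (γ / (1 - γ) * (∑ s, visitationFrom P π γ st s * ∑ a, |π s a - η s a|)) := by
    refine (abs_add_le _ _).trans (add_le_add hT1 (hT2.trans ?_))
    exact mul_le_mul_of_nonneg_left hLW hRmax
  have hhalf : (∑ s, visitationFrom P π γ st s * ((1 / 2) * ∑ a, |π s a - η s a|))
      = (1 / 2) * ∑ s, visitationFrom P π γ st s * ∑ a, |π s a - η s a| := by
    rw [Finset.mul_sum]
    exact Finset.sum_congr rfl fun s _ => by ring
  calc (1 / (1 - γ)) * |(∑ s, visitationFrom P π γ st s * ∑ a, (π s a - η s a) * r s a)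
        + ∑ s, (visitationFrom P π γ st s - visitationFrom P η γ st s)
          * ∑ a, η s a * r s a|
      ≤ (1 / (1 - γ)) * (Rmax * (∑ s, visitationFrom P π γ st s * ∑ a, |π s a - η s a|)
        + Rmax * (γ / (1 - γ) * (∑ s, visitationFrom P π γ st s * ∑ a, |π s a - η s a|))) :=
        mul_le_mul_of_nonneg_left hsum2 (by positivity)
    _ = (2 * Rmax / (1 - γ) ^ 2) *
        ((1 / 2) * ∑ s, visitationFrom P π γ st s * ∑ a, |π s a - η s a|) := by
        have hne : (1 - γ) ≠ 0 := ne_of_gt hγ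
        field_simp
        ring
    _ = (2 * Rmax / (1 - γ) ^ 2) *
        ∑ s, visitationFrom P π γ st s * ((1 / 2) * ∑ a, |π s a - η s a|) := by
        rw [hhalf]
end
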